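/- Work in Z[X_1,…,X_n] and let 1 ≤ m ≤ n−1. For every integer j ≥ 0: (1) ∂_m( h_j(X_1,…,X_m) ) = − h_{j−1}(X_1,…,X_{m+1}); (2) ∂_m( e_j(X_{m+1},…,X_n) ) = e_{j−1}(X_{m+2},…,X_n). Here the conventions h_{−1} = 0 and e_{−1} = 0 are used, and for an empty set of variables e_0 = 1 and e_r = 0 for r > 0. -/

import Mathlib

/-!
Since `X_{m+1} - X_m` is a non-zero-divisor, `∂_m P` is determined by `P - s_m P`. The
transposition `s_m` exchanges one variable of each alphabet with a variable outside it, so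
`P - s_m P` is a difference of `h_j` (resp. `e_j`) over two alphabets `A ∪ {u}`, `A ∪ {v}`.
From `e_j(A ∪ {u}) = u e_{j-1}(A) + e_j(A)` that difference is `(u - v) e_{j-1}(A)`, and from
`h_j(A ∪ {u}) = u h_{j-1}(A ∪ {u}) + h_j(A)`, by induction on `j`, it is
`(u - v) h_{j-1}(A ∪ {u, v})`.
-/

open scoped BigOperators

namespace Dem

/-- The polynomial ring `ℤ[X_1, …, X_n]` (0-based variables). -/
abbrev R (n : ℕ) := MvPolynomial (Fin n) ℤ

/-- `D` is the family of Demazure (BGG) operators `∂_i` (0-based), characterized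
by `(X_{i+1} - X_i) · ∂_i P = P - s_i(P)`. -/
def IsDemFamily {n : ℕ} (D : ℕ → R n → R n) : Prop :=
  ∀ (i : ℕ) (h : i + 1 < n) (P : R n),
    (MvPolynomial.X (⟨i + 1, h⟩ : Fin n) - MvPolynomial.X ⟨i, by omega⟩) * D i P
      = P - MvPolynomial.rename (Equiv.swap (⟨i, by omega⟩ : Fin n) ⟨i + 1, h⟩) P

/-- `∂_w = ∂_{i_1} ∘ ⋯ ∘ ∂_{i_r}` for a word `l = [i_1, …, i_r]` (rightmost
applied first). -/
def applyWord {n : ℕ} (D : ℕ → R n → R n) (l : List ℕ) (P : R n) : R n :=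
  l.foldr (fun i Q => D i Q) P

/-- The permutation of `Fin n` given by a word in the simple transpositions. -/
def permOfWord (n : ℕ) (l : List ℕ) : Equiv.Perm (Fin n) :=
  (l.map fun i =>
    if h : i + 1 < n then Equiv.swap (⟨i, by omega⟩ : Fin n) ⟨i + 1, h⟩ else 1).prod

/-- `l` is a reduced word for the permutation `w`. -/
def IsReducedWordFor (n : ℕ) (l : List ℕ) (w : Equiv.Perm (Fin n)) : Prop :=
  (∀ i ∈ l, i + 1 < n) ∧ permOfWord n l = w ∧
    ∀ l' : List ℕ, (∀ i ∈ l', i + 1 < n) → permOfWord n l' = w → l.length ≤ l'.length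

/-- The standard reduced word for the longest element of `S_m` (0-based). -/
def longWord (m : ℕ) : List ℕ :=
  (List.range m).foldr (fun j acc => (List.range j).reverse ++ acc) []

/-- The set of variables `X_{lo+1}, …, X_n` (0-based indices `≥ lo`). -/
def varsFrom (n lo : ℕ) : Finset (Fin n) :=
  Finset.univ.filter fun a : Fin n => lo ≤ a.val

/-- The set of variables `X_1, …, X_m` (0-based indices `< m`). -/
def varsUpto (n m : ℕ) : Finset (Fin n) :=
  Finset.univ.filter fun a : Fin n => a.val < m

/-- Elementary symmetric polynomial of degree `m` in the variables of `s`. -/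
noncomputable def eOn {n : ℕ} (s : Finset (Fin n)) (m : ℕ) : R n :=
  ∑ T ∈ s.powersetCard m, ∏ a ∈ T, MvPolynomial.X a

/-- Complete homogeneous symmetric polynomial of degree `j` in the variables of
`s`. -/
noncomputable def hOn {n : ℕ} (s : Finset (Fin n)) (j : ℕ) : R n :=
  ∑ d ∈ s.sym j, (Multiset.map MvPolynomial.X (d : Multiset (Fin n))).prod

/-- `P` is symmetric in the variables with (0-based) index `≥ lo`. -/
def SymFrom {n : ℕ} (lo : ℕ) (P : R n) : Prop :=
  ∀ a b : Fin n, lo ≤ a.val → lo ≤ b.val →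
    MvPolynomial.rename (Equiv.swap a b) P = P

/-- The monomial symmetric polynomial in the first `c` of the `n` variables,
attached to the exponent vector `w` (the sum of the distinct monomials in the
`S_c`-orbit of `X_1^{w_1} ⋯ X_c^{w_c}`). -/
noncomputable def msymBlock {n : ℕ} (c : ℕ) (w : Fin c → ℕ) : R n :=
  ∑ g ∈ Finset.image
      (fun σ : Equiv.Perm (Fin c) =>
        fun i : Fin n => if h : i.val < c then w (σ ⟨i.val, h⟩) else 0)
      Finset.univ,
    ∏ i, MvPolynomial.X i ^ g i

open MvPolynomial Finset

variable {n : ℕ}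

lemma hOn_zero (s : Finset (Fin n)) : hOn s 0 = 1 := by
  simp only [hOn, sym_zero, sum_singleton]
  rfl

lemma eOn_zero (s : Finset (Fin n)) : eOn s 0 = 1 := by
  simp [eOn]

lemma eOn_insert {A : Finset (Fin n)} {u : Fin n} (hu : u ∉ A) (k : ℕ) :
    eOn (insert u A) (k + 1) = X u * eOn A k + eOn A (k + 1) := by
  have hu_notMem {T : Finset (Fin n)} (hT : T ∈ A.powersetCard k) : u ∉ T :=
    fun h => hu ((mem_powersetCard.mp hT).1 h)
  rw [eOn, powersetCard_succ_insert hu, sum_union, sum_image, add_comm, eOn, eOn, mul_sum]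
  · exact congrArg₂ _ (sum_congr rfl fun T hT => prod_insert (hu_notMem hT)) rfl
  · intro T hT T' hT' h
    rw [← erase_insert (hu_notMem hT), ← erase_insert (hu_notMem hT'), h]
  · refine disjoint_left.mpr fun T hT hT' => ?_
    obtain ⟨T', -, rfl⟩ := mem_image.mp hT'
    exact hu ((mem_powersetCard.mp hT).1 (mem_insert_self u T'))

lemma hOn_insert {A : Finset (Fin n)} {u : Fin n} (hu : u ∉ A) (j : ℕ) :
    hOn (insert u A) (j + 1) = X u * hOn (insert u A) j + hOn A (j + 1) := by
  rw [hOn, ← sum_filter_add_sum_filter_not _ (fun d => u ∈ d)]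
  congr 1
  · rw [hOn, mul_sum]
    refine sum_bij' (fun d hd => d.erase u (mem_filter.mp hd).2) (fun d _ => u ::ₛ d)
      ?_ ?_ (fun d _ => Sym.cons_erase _) (fun d _ => Sym.erase_cons_head _ _) ?_
    · intro d hd
      rw [mem_sym_iff]
      exact fun a ha => mem_sym_iff.mp (mem_filter.mp hd).1 a (Multiset.erase_subset u _ ha)
    · intro d hd
      refine mem_filter.mpr ⟨mem_sym_iff.mpr fun a ha => ?_, Sym.mem_cons_self u d⟩
      rcases Sym.mem_cons.mp ha with rfl | h
      · exact mem_insert_self _ _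
      · exact mem_sym_iff.mp hd a h
    · intro d hd
      conv_lhs => rw [← Sym.cons_erase (mem_filter.mp hd).2]
      rw [Sym.coe_cons, Multiset.map_cons, Multiset.prod_cons]
  · rw [hOn]
    refine sum_congr (ext fun d => ?_) fun _ _ => rfl
    simp only [mem_filter, mem_sym_iff, mem_insert]
    constructor
    · rintro ⟨h, hud⟩ a ha
      exact (h a ha).resolve_left fun hau => hud (hau ▸ ha)
    · exact fun h => ⟨fun a ha => Or.inr (h a ha), fun hud => hu (h u hud)⟩

lemma eOn_insert_sub_eOn_insert {A : Finset (Fin n)} {u v : Fin n} (hu : u ∉ A) (hv : v ∉ A)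
    (k : ℕ) :
    eOn (insert u A) (k + 1) - eOn (insert v A) (k + 1) = (X u - X v) * eOn A k := by
  rw [eOn_insert hu, eOn_insert hv]
  ring

lemma hOn_insert_sub_hOn_insert {A : Finset (Fin n)} {u v : Fin n} (hu : u ∉ A) (hv : v ∉ A)
    (huv : u ≠ v) (j : ℕ) :
    hOn (insert u A) (j + 1) - hOn (insert v A) (j + 1)
      = (X u - X v) * hOn (insert u (insert v A)) j := by
  induction j with
  | zero =>
    rw [hOn_insert hu, hOn_insert hv, hOn_zero, hOn_zero, hOn_zero]
    ring
  | succ j ih =>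
    have hu' : u ∉ insert v A := by simp [huv, hu]
    calc hOn (insert u A) (j + 2) - hOn (insert v A) (j + 2)
        = X u * (hOn (insert u A) (j + 1) - hOn (insert v A) (j + 1))
            + (X u - X v) * hOn (insert v A) (j + 1) := by
          rw [hOn_insert hu, hOn_insert hv]
          ring
      _ = (X u - X v) * hOn (insert u (insert v A)) (j + 1) := by
          rw [ih, hOn_insert hu' j]
          ring

lemma rename_eOn (σ : Equiv.Perm (Fin n)) (s : Finset (Fin n)) (k : ℕ) :
    rename σ (eOn s k) = eOn (s.image σ) k := by
  rw [← Equiv.coe_toEmbedding, ← map_eq_image, eOn, eOn, powersetCard_map, sum_map, map_sum]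
  refine sum_congr rfl fun T _ => ?_
  simp [map_prod]

lemma rename_hOn (σ : Equiv.Perm (Fin n)) (s : Finset (Fin n)) (j : ℕ) :
    rename σ (hOn s j) = hOn (s.image σ) j := by
  rw [← Equiv.coe_toEmbedding, ← map_eq_image, hOn, hOn, sym_map, sum_map, map_sum]
  refine sum_congr rfl fun d _ => ?_
  simp [map_multiset_prod, Multiset.map_map]

lemma image_swap_insert {α : Type*} [DecidableEq α] {s : Finset α} {a b : α} (ha : a ∉ s)
    (hb : b ∉ s) :
    (insert a s).image (Equiv.swap a b) = insert b s := by
  rw [image_insert, Equiv.swap_apply_left, image_congr, image_id']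
  intro x hx
  exact Equiv.swap_apply_of_ne_of_ne (ne_of_mem_of_not_mem hx ha) (ne_of_mem_of_not_mem hx hb)

section Demazure

variable {D : ℕ → R n → R n} {i : ℕ}

lemma IsDemFamily.apply_eq_of_mul_eq (hD : IsDemFamily D) (h : i + 1 < n)
    {P Q : R n}
    (hQ : (X (⟨i + 1, h⟩ : Fin n) - X ⟨i, by omega⟩) * Q
        = P - rename (Equiv.swap (⟨i, by omega⟩ : Fin n) ⟨i + 1, h⟩) P) :
    D i P = Q :=
  mul_left_cancel₀ (sub_ne_zero.mpr (X_injective.ne (by simp))) ((hD i h P).trans hQ.symm)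

lemma IsDemFamily.apply_eq_zero_of_rename_swap_eq (hD : IsDemFamily D) (h : i + 1 < n)
    {P : R n}
    (hP : rename (Equiv.swap (⟨i, by omega⟩ : Fin n) ⟨i + 1, h⟩) P = P) :
    D i P = 0 :=
  hD.apply_eq_of_mul_eq h (by rw [hP, sub_self, mul_zero])

lemma IsDemFamily.apply_hOn_insert (hD : IsDemFamily D) (h : i + 1 < n)
    {A : Finset (Fin n)} (ha : (⟨i, by omega⟩ : Fin n) ∉ A)
    (hb : (⟨i + 1, h⟩ : Fin n) ∉ A) (j : ℕ) :
    D i (hOn (insert ⟨i, by omega⟩ A) (j + 1))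
      = -hOn (insert ⟨i, by omega⟩ (insert ⟨i + 1, h⟩ A)) j := by
  refine hD.apply_eq_of_mul_eq h ?_
  rw [rename_hOn, image_swap_insert ha hb, hOn_insert_sub_hOn_insert ha hb (by simp)]
  ring

lemma IsDemFamily.apply_eOn_insert (hD : IsDemFamily D) (h : i + 1 < n)
    {A : Finset (Fin n)} (ha : (⟨i, by omega⟩ : Fin n) ∉ A)
    (hb : (⟨i + 1, h⟩ : Fin n) ∉ A) (j : ℕ) :
    D i (eOn (insert ⟨i + 1, h⟩ A) (j + 1)) = eOn A j := by
  refine hD.apply_eq_of_mul_eq h ?_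
  rw [rename_eOn, Equiv.swap_comm, image_swap_insert hb ha, eOn_insert_sub_eOn_insert hb ha]

end Demazure

lemma varsUpto_succ {i : ℕ} (hi : i < n) :
    varsUpto n (i + 1) = insert ⟨i, hi⟩ (varsUpto n i) := by
  ext x
  simp only [varsUpto, mem_filter, mem_univ, true_and, mem_insert, Fin.ext_iff]
  omega

lemma varsFrom_eq_insert {i : ℕ} (hi : i < n) :
    varsFrom n i = insert ⟨i, hi⟩ (varsFrom n (i + 1)) := by
  ext x
  simp only [varsFrom, mem_filter, mem_univ, true_and, mem_insert, Fin.ext_iff]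
  omega

end Dem

open Dem in
/-- Paper indexing `1 ≤ m ≤ n - 1`: the Demazure operator `∂_m` is `D (m - 1)`. -/
theorem statement9 (n : ℕ) (D : ℕ → R n → R n) (hD : IsDemFamily D)
    (m : ℕ) (hm1 : 1 ≤ m) (hm2 : m < n) :
    (∀ j : ℕ, D (m - 1) (hOn (varsUpto n m) (j + 1))
        = -hOn (varsUpto n (m + 1)) j) ∧
    (D (m - 1) (hOn (varsUpto n m) 0) = 0) ∧
    (∀ j : ℕ, D (m - 1) (eOn (varsFrom n m) (j + 1))
        = eOn (varsFrom n (m + 1)) j) ∧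
    (D (m - 1) (eOn (varsFrom n m) 0) = 0) := by
  obtain ⟨i, rfl⟩ : ∃ i, m = i + 1 := ⟨m - 1, by omega⟩
  have hin : i + 1 < n := hm2
  rw [Nat.add_sub_cancel]
  refine ⟨fun j => ?_, hD.apply_eq_zero_of_rename_swap_eq hin (by rw [hOn_zero, map_one]),
    fun j => ?_, hD.apply_eq_zero_of_rename_swap_eq hin (by rw [eOn_zero, map_one])⟩
  · rw [varsUpto_succ hin, varsUpto_succ (by omega : i < n), Finset.insert_comm]
    exact hD.apply_hOn_insert hin (by simp [varsUpto]) (by simp [varsUpto]) j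
  · rw [varsFrom_eq_insert hin]
    exact hD.apply_eOn_insert hin (by simp [varsFrom]) (by simp [varsFrom]) j
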